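/- Let T : (Fin 3 → ℂ) → (Fin 3 → ℂ) be the map (x₀, x₁, x₂) ↦ (conj x₀, −conj x₂, conj x₁), and let σ be the induced self-map of the complex projective plane ℙ(ℂ, Fin 3 → ℂ), characterized by σ([v]) = [T v] for every nonzero vector v. Then σ has exactly one fixed point: for every point x of ℙ(ℂ, Fin 3 → ℂ), σ(x) = x if and only if x = [(1,0,0)]. -/
import Mathlib


open scoped LinearAlgebra.Projectivization

/-- The conjugate-linear map `(x₀, x₁, x₂) ↦ (conj x₀, −conj x₂, conj x₁)` on `ℂ³`. -/
noncomputable def T : (Fin 3 → ℂ) → (Fin 3 → ℂ) :=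
  fun x => ![(starRingEnd ℂ) (x 0), -(starRingEnd ℂ) (x 2), (starRingEnd ℂ) (x 1)]

/-- The vector `(1,0,0)` in `ℂ³` is nonzero. -/
lemma e1_ne_zero : (![1, 0, 0] : Fin 3 → ℂ) ≠ 0 := by
  intro h
  have h0 := congrFun h 0
  simp at h0

lemma T_ne_zero {v : Fin 3 → ℂ} (hv : v ≠ 0) : T v ≠ 0 := by
  intro h
  apply hv
  have h0 := congrFun h 0
  have h1 := congrFun h 1
  have h2 := congrFun h 2
  simp [T] at h0 h1 h2
  funext i
  fin_cases i <;> simp [h0, h1, h2]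

/-- The induced self-map `σ` of `ℂP²`, with `σ([v]) = [T v]`, has exactly one
fixed point, namely `[1 : 0 : 0]`. -/
theorem fixed_points_eq_singleton
    (σ : ℙ ℂ (Fin 3 → ℂ) → ℙ ℂ (Fin 3 → ℂ))
    (hσ : ∀ (v : Fin 3 → ℂ) (hv : v ≠ 0) (hTv : T v ≠ 0),
      σ (Projectivization.mk ℂ v hv) = Projectivization.mk ℂ (T v) hTv) :
    ∀ x : ℙ ℂ (Fin 3 → ℂ),
      σ x = x ↔ x = Projectivization.mk ℂ ![1, 0, 0] e1_ne_zero := by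
  intro x
  induction x using Projectivization.ind with
  | h v hv =>
  rw [hσ v hv (T_ne_zero hv)]
  rw [Projectivization.mk_eq_mk_iff', Projectivization.mk_eq_mk_iff']
  constructor
  · rintro ⟨a, ha⟩
    have h0 := congrFun ha 0
    have h1 := congrFun ha 1
    have h2 := congrFun ha 2
    simp [T] at h0 h1 h2
    -- h0: a * v 0 = conj (v 0), h1: a * v 1 = - conj (v 2), h2: a * v 2 = conj (v 1)
    have hv2 : v 2 = 0 := by
      have := congrArg (starRingEnd ℂ) h2
      simp at this
      -- this : conj a * conj (v 2) = v 1
      have h1' : a * (starRingEnd ℂ a * (starRingEnd ℂ) (v 2)) = -(starRingEnd ℂ) (v 2) := by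
        rw [this]; exact h1
      have : ((a * starRingEnd ℂ a) + 1) * (starRingEnd ℂ) (v 2) = 0 := by ring_nf; linear_combination h1'
      rcases mul_eq_zero.1 this with h | h
      · exfalso
        have : (Complex.normSq a : ℂ) + 1 = 0 := by
          rw [← Complex.mul_conj]; exact h
        have := congrArg Complex.re this
        simp at this
        nlinarith [Complex.normSq_nonneg a]
      · simpa using congrArg (starRingEnd ℂ) h
    have hv1 : v 1 = 0 := by
      have := congrArg (starRingEnd ℂ) h2
      simp [hv2] at this
      exact this.symm
    have hv0 : v 0 ≠ 0 := by
      intro h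
      apply hv
      funext i; fin_cases i <;> simp [h, hv1, hv2]
    refine ⟨v 0, ?_⟩
    funext i; fin_cases i <;> simp [hv1, hv2]
  · rintro ⟨a, ha⟩
    have h0 := congrFun ha 0
    have h1 := congrFun ha 1
    have h2 := congrFun ha 2
    simp at h0 h1 h2
    refine ⟨(starRingEnd ℂ) a / a, ?_⟩
    have ha0 : a ≠ 0 := by
      intro h; apply hv; funext i; fin_cases i <;> simp [← h0, ← h1, ← h2, h]
    funext i
    fin_cases i <;>
      simp [T, ← h0, ← h1, ← h2] <;> field_simp
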